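/- arXiv:math/9704204 — 5 statements merged into one kernel-verified Lean document; each statement's English description precedes it below -/
import Mathlib

section
/- Let n ≥ 3. Every matrix M ∈ U(n) factors uniquely as M = ι(φ(M)) · h with h ∈ H(n), where φ : U(n) → U(n−2) deletes the first and last rows and columns and ι : U(n−2) → U(n) is the embedding N ↦ 1 ⊕ N ⊕ 1. In particular U(n) = ι(U(n−2)) · H(n). -/
/-!
The block-diagonal embedding `ι` is multiplicative, and `φ(M)` is unitriangular, hence invertible
over `ℤ`; so `ι(φ(M))` is invertible with inverse `ι(φ(M)⁻¹)`, which forces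
`h = ι(φ(M)⁻¹) * M`. The first and last rows of this `h` are those of `M`, and on a middle row,
away from the last column, `h` computes `φ(M)⁻¹ * φ(M) = 1` (the first column contributes
nothing since `M` vanishes below the diagonal), so `h ∈ H(n)`.
-/

/-- `M` is upper unitriangular: `1`s on the diagonal, `0`s below it. -/
def InU (n : ℕ) (M : Matrix (Fin n) (Fin n) ℤ) : Prop :=
  (∀ i, M i i = 1) ∧ ∀ i j : Fin n, (j : ℕ) < (i : ℕ) → M i j = 0

/-- `M ∈ H(n)`: `M` is upper unitriangular and all off-diagonal entries vanish
except possibly those in the first row or the last column (1-based indexing). -/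
def InH (n : ℕ) (M : Matrix (Fin n) (Fin n) ℤ) : Prop :=
  InU n M ∧ ∀ i j : Fin n, i ≠ j → (i : ℕ) + 1 ≠ 1 → (j : ℕ) + 1 ≠ n → M i j = 0

/-- The "forgetful" map `φ : U(n) → U(n-2)` deleting the first and last rows and
columns: `φ(M)_{ij} = M_{i+1, j+1}` (0-based indexing). -/
def phiMap (n : ℕ) (hn : 3 ≤ n) (M : Matrix (Fin n) (Fin n) ℤ) :
    Matrix (Fin (n - 2)) (Fin (n - 2)) ℤ :=
  Matrix.of fun i j =>
    M ⟨(i : ℕ) + 1, by have := i.isLt; omega⟩ ⟨(j : ℕ) + 1, by have := j.isLt; omega⟩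

/-- The embedding `ι : U(n-2) → U(n)`, `N ↦ 1 ⊕ N ⊕ 1`: the middle
`(n-2) × (n-2)` block is `N` and the off-diagonal entries of the first row and last
column (and last row and first column) are all zero. -/
def iotaMap (n : ℕ) (hn : 3 ≤ n) (N : Matrix (Fin (n - 2)) (Fin (n - 2)) ℤ) :
    Matrix (Fin n) (Fin n) ℤ :=
  Matrix.of fun a b =>
    if h : 1 ≤ (a : ℕ) ∧ (a : ℕ) ≤ n - 2 ∧ 1 ≤ (b : ℕ) ∧ (b : ℕ) ≤ n - 2 then
      N ⟨(a : ℕ) - 1, by omega⟩ ⟨(b : ℕ) - 1, by omega⟩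
    else if a = b then 1 else 0

def midIdx (n : ℕ) (i : Fin (n - 2)) : Fin n := ⟨(i : ℕ) + 1, by omega⟩

lemma midIdx_injective (n : ℕ) : Function.Injective (midIdx n) :=
  fun i j hij => Fin.ext (by simpa [midIdx] using congrArg Fin.val hij)

section midIdx

variable {n : ℕ}

lemma eq_midIdx_or_end (a : Fin n) :
    (∃ i, a = midIdx n i) ∨ (a : ℕ) = 0 ∨ (a : ℕ) = n - 1 := by
  by_cases ha : 1 ≤ (a : ℕ) ∧ (a : ℕ) ≤ n - 2
  · exact Or.inl ⟨⟨(a : ℕ) - 1, by omega⟩, Fin.ext (by simp only [midIdx]; omega)⟩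
  · omega

lemma midIdx_ne_end (i : Fin (n - 2)) {a : Fin n} (ha : (a : ℕ) = 0 ∨ (a : ℕ) = n - 1) :
    midIdx n i ≠ a := by
  rintro rfl
  simp only [midIdx] at ha
  omega

lemma one_apply_midIdx (i j : Fin (n - 2)) :
    (1 : Matrix (Fin n) (Fin n) ℤ) (midIdx n i) (midIdx n j) =
      (1 : Matrix (Fin (n - 2)) (Fin (n - 2)) ℤ) i j := by
  simp only [Matrix.one_apply, (midIdx_injective n).eq_iff]

lemma sum_eq_sum_midIdx (f : Fin n → ℤ)
    (hf : ∀ a : Fin n, (a : ℕ) = 0 ∨ (a : ℕ) = n - 1 → f a = 0) :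
    ∑ a, f a = ∑ i, f (midIdx n i) := by
  refine (Fintype.sum_of_injective _ (midIdx_injective n) _ _ (fun a ha => hf a ?_)
    fun _ => rfl).symm
  exact (eq_midIdx_or_end a).resolve_left fun ⟨i, hi⟩ => ha ⟨i, hi.symm⟩

end midIdx

lemma InU.isUnit_det {m : ℕ} {M : Matrix (Fin m) (Fin m) ℤ} (hM : InU m M) :
    IsUnit M.det := by
  rw [Matrix.det_of_isUpperTriangular fun i j hij => hM.2 i j hij]
  simp [hM.1]

lemma InU.phiMap {n : ℕ} (hn : 3 ≤ n) {M : Matrix (Fin n) (Fin n) ℤ} (hM : InU n M) :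
    InU (n - 2) (phiMap n hn M) :=
  ⟨fun _ => hM.1 _, fun _ _ hij => hM.2 _ _ (Nat.succ_lt_succ hij)⟩

lemma phiMap_apply {n : ℕ} (hn : 3 ≤ n) (M : Matrix (Fin n) (Fin n) ℤ) (i j : Fin (n - 2)) :
    phiMap n hn M i j = M (midIdx n i) (midIdx n j) := rfl

lemma inH_of_diag_of_offDiag {n : ℕ} {h : Matrix (Fin n) (Fin n) ℤ} (hdiag : ∀ i, h i i = 1)
    (hoff : ∀ i j : Fin n, i ≠ j → (i : ℕ) + 1 ≠ 1 → (j : ℕ) + 1 ≠ n → h i j = 0) :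
    InH n h :=
  ⟨⟨hdiag, fun i j hji => hoff i j (fun hij => by omega) (by omega) (by omega)⟩, hoff⟩

section iotaMap

variable {n : ℕ} (hn : 3 ≤ n)

lemma iotaMap_midIdx (N : Matrix (Fin (n - 2)) (Fin (n - 2)) ℤ) (i j : Fin (n - 2)) :
    iotaMap n hn N (midIdx n i) (midIdx n j) = N i j := by
  simp [iotaMap, midIdx]

lemma iotaMap_of_end_left (N : Matrix (Fin (n - 2)) (Fin (n - 2)) ℤ) {a : Fin n}
    (ha : (a : ℕ) = 0 ∨ (a : ℕ) = n - 1) (b : Fin n) :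
    iotaMap n hn N a b = (1 : Matrix (Fin n) (Fin n) ℤ) a b := by
  rw [iotaMap, Matrix.of_apply, dif_neg (by omega), Matrix.one_apply]

lemma iotaMap_of_end_right (N : Matrix (Fin (n - 2)) (Fin (n - 2)) ℤ) (a : Fin n) {b : Fin n}
    (hb : (b : ℕ) = 0 ∨ (b : ℕ) = n - 1) :
    iotaMap n hn N a b = (1 : Matrix (Fin n) (Fin n) ℤ) a b := by
  rw [iotaMap, Matrix.of_apply, dif_neg (by omega), Matrix.one_apply]

lemma iotaMap_mul_apply_of_end (N : Matrix (Fin (n - 2)) (Fin (n - 2)) ℤ)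
    (X : Matrix (Fin n) (Fin n) ℤ) {a : Fin n} (ha : (a : ℕ) = 0 ∨ (a : ℕ) = n - 1) (b : Fin n) :
    (iotaMap n hn N * X) a b = X a b := by
  simp only [Matrix.mul_apply, iotaMap_of_end_left hn N ha]
  rw [← Matrix.mul_apply, Matrix.one_mul]

lemma iotaMap_mul_apply_midIdx (N : Matrix (Fin (n - 2)) (Fin (n - 2)) ℤ)
    (X : Matrix (Fin n) (Fin n) ℤ) (i : Fin (n - 2)) (b : Fin n) :
    (iotaMap n hn N * X) (midIdx n i) b = ∑ j, N i j * X (midIdx n j) b := by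
  rw [Matrix.mul_apply, sum_eq_sum_midIdx]
  · simp only [iotaMap_midIdx]
  · intro a ha
    rw [iotaMap_of_end_right hn N _ ha, Matrix.one_apply_ne (midIdx_ne_end i ha), zero_mul]

lemma iotaMap_mul (N N' : Matrix (Fin (n - 2)) (Fin (n - 2)) ℤ) :
    iotaMap n hn (N * N') = iotaMap n hn N * iotaMap n hn N' := by
  ext a b
  obtain ⟨i, rfl⟩ | ha := eq_midIdx_or_end a
  · rw [iotaMap_mul_apply_midIdx]
    obtain ⟨l, rfl⟩ | hb := eq_midIdx_or_end b
    · simp only [iotaMap_midIdx, Matrix.mul_apply]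
    · simp only [iotaMap_of_end_right hn _ _ hb, Matrix.one_apply_ne (midIdx_ne_end _ hb),
        mul_zero, Finset.sum_const_zero]
  · rw [iotaMap_mul_apply_of_end hn N _ ha, iotaMap_of_end_left hn _ ha,
      iotaMap_of_end_left hn _ ha]

lemma iotaMap_one : iotaMap n hn 1 = 1 := by
  ext a b
  obtain ⟨i, rfl⟩ | ha := eq_midIdx_or_end a
  · obtain ⟨j, rfl⟩ | hb := eq_midIdx_or_end b
    · rw [iotaMap_midIdx, one_apply_midIdx]
    · exact iotaMap_of_end_right hn 1 _ hb
  · exact iotaMap_of_end_left hn 1 ha b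

end iotaMap

lemma iotaMap_inv_phiMap_mul_apply_midIdx {n : ℕ} (hn : 3 ≤ n) {M : Matrix (Fin n) (Fin n) ℤ}
    (hM : InU n M) (i : Fin (n - 2)) {b : Fin n} (hb : (b : ℕ) ≠ n - 1) :
    (iotaMap n hn (phiMap n hn M)⁻¹ * M) (midIdx n i) b =
      (1 : Matrix (Fin n) (Fin n) ℤ) (midIdx n i) b := by
  rw [iotaMap_mul_apply_midIdx]
  obtain ⟨l, rfl⟩ | hb0 := eq_midIdx_or_end b
  · simp only [← phiMap_apply hn M]
    rw [← Matrix.mul_apply, Matrix.nonsing_inv_mul _ (hM.phiMap hn).isUnit_det, one_apply_midIdx]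
  · have hb0 : (b : ℕ) = 0 := hb0.resolve_right hb
    rw [Matrix.one_apply_ne (midIdx_ne_end i (Or.inl hb0))]
    refine Finset.sum_eq_zero fun j _ => ?_
    rw [hM.2 _ _ (by simp [midIdx, hb0]), mul_zero]

lemma inH_iotaMap_inv_phiMap_mul {n : ℕ} (hn : 3 ≤ n) {M : Matrix (Fin n) (Fin n) ℤ}
    (hM : InU n M) : InH n (iotaMap n hn (phiMap n hn M)⁻¹ * M) := by
  refine inH_of_diag_of_offDiag (fun a => ?_) (fun a b hab ha hb => ?_)
  · obtain ⟨i, rfl⟩ | ha := eq_midIdx_or_end a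
    · rw [iotaMap_inv_phiMap_mul_apply_midIdx hn hM i (by simp only [midIdx]; omega),
        Matrix.one_apply_eq]
    · rw [iotaMap_mul_apply_of_end hn _ _ ha, hM.1]
  · obtain ⟨i, rfl⟩ | ha' := eq_midIdx_or_end a
    · rw [iotaMap_inv_phiMap_mul_apply_midIdx hn hM i (by omega), Matrix.one_apply_ne hab]
    · rw [iotaMap_mul_apply_of_end hn _ _ ha']
      exact hM.2 a b (by omega)

/-- Every `M ∈ U(n)` factors uniquely as `M = ι(φ(M)) · h` with `h ∈ H(n)`;
in particular `U(n) = ι(U(n-2)) · H(n)`. -/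
theorem Un_unique_factorization (n : ℕ) (hn : 3 ≤ n) :
    ∀ M : Matrix (Fin n) (Fin n) ℤ, InU n M →
      ∃! h : Matrix (Fin n) (Fin n) ℤ,
        InH n h ∧ M = iotaMap n hn (phiMap n hn M) * h := by
  intro M hM
  have hdet := (hM.phiMap hn).isUnit_det
  refine ⟨iotaMap n hn (phiMap n hn M)⁻¹ * M, ⟨inH_iotaMap_inv_phiMap_mul hn hM, ?_⟩, ?_⟩
  · rw [← mul_assoc, ← iotaMap_mul, Matrix.mul_nonsing_inv _ hdet, iotaMap_one, one_mul]
  · rintro h ⟨-, hMh⟩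
    calc h = iotaMap n hn ((phiMap n hn M)⁻¹ * phiMap n hn M) * h := by
          rw [Matrix.nonsing_inv_mul _ hdet, iotaMap_one, one_mul]
      _ = _ := by rw [iotaMap_mul, mul_assoc, ← hMh]
end

section
/- Let n ≥ 3 and let 1 < i < j < n. Let w = x_2^{p_2} ⋯ x_{n−1}^{p_{n−1}} · y_2^{q_2} ⋯ y_{n−1}^{q_{n−1}} · z^r be an element of H(n) in normal form. Then the conjugate (1 + e_{ij})^{−1} · w · (1 + e_{ij}) equals the normal form element x_2^{p'_2} ⋯ x_{n−1}^{p'_{n−1}} · y_2^{q'_2} ⋯ y_{n−1}^{q'_{n−1}} · z^{r'}, where p'_m = p_m for m ≠ j, p'_j = p_j + p_i, q'_m = q_m for m ≠ i, q'_i = q_i − q_j, and r' = r. -/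
/-- The `n × n` integer matrix whose only nonzero entry is a `1` in position `(i, j)`
(1-based indexing). -/
def eMat (n i j : ℕ) : Matrix (Fin n) (Fin n) ℤ :=
  Matrix.of fun a b => if (a : ℕ) + 1 = i ∧ (b : ℕ) + 1 = j then 1 else 0

/-- `x_j = 1 + e_{1j}` (1-based indexing). -/
def xMat (n j : ℕ) : Matrix (Fin n) (Fin n) ℤ := 1 + eMat n 1 j

/-- `y_i = 1 + e_{in}` (1-based indexing). -/
def yMat (n i : ℕ) : Matrix (Fin n) (Fin n) ℤ := 1 + eMat n i n

/-- `z = 1 + e_{1n}`. -/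
def zMat (n : ℕ) : Matrix (Fin n) (Fin n) ℤ := 1 + eMat n 1 n

/-- The normal form word
`x_2^{p_2} ⋯ x_{n-1}^{p_{n-1}} · y_2^{q_2} ⋯ y_{n-1}^{q_{n-1}} · z^r`
(the exponents are indexed by the 1-based positions `2, …, n-1`;
`List.range' 2 (n-2)` is the list `[2, 3, …, n-1]`). -/
noncomputable def nfWord (n : ℕ) (p q : ℕ → ℤ) (r : ℤ) : Matrix (Fin n) (Fin n) ℤ :=
  ((List.range' 2 (n - 2)).map fun j => xMat n j ^ p j).prod *
    ((List.range' 2 (n - 2)).map fun i => yMat n i ^ q i).prod *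
    zMat n ^ r

abbrev MM (n : ℕ) := Matrix (Fin n) (Fin n) ℤ

lemma eMat_mul_of_ne {n : ℕ} {b c : ℕ} (h : b ≠ c) (a d : ℕ) :
    eMat n a b * eMat n c d = 0 := by
  ext x y
  simp only [Matrix.mul_apply, eMat, Matrix.of_apply, Matrix.zero_apply]
  apply Finset.sum_eq_zero
  intro m _
  split_ifs <;> (try norm_num) <;> omega

lemma eMat_mul_self {n b : ℕ} (hb1 : 1 ≤ b) (hbn : b ≤ n) (a d : ℕ) :
    eMat n a b * eMat n b d = eMat n a d := by
  ext x y
  simp only [Matrix.mul_apply, eMat, Matrix.of_apply]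
  rw [Finset.sum_eq_single (⟨b - 1, by omega⟩ : Fin n)]
  · simp only []
    split_ifs <;> (try norm_num) <;> omega
  · intro m _ hm
    have hne : (m : ℕ) + 1 ≠ b := fun hc => hm (Fin.ext (by simp; omega))
    split_ifs <;> (try norm_num) <;> omega
  · intro h; exact absurd (Finset.mem_univ _) h

lemma one_add_zpow {n : ℕ} (E : MM n) (hE : E * E = 0) (c : ℤ) :
    (1 + E) ^ c = 1 + c • E := by
  have key : ∀ a b : ℤ, (1 + a • E) * (1 + b • E) = 1 + (a + b) • E := by
    intro a b
    rw [add_smul]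
    noncomm_ring [hE]
  set u : (MM n)ˣ := ⟨1 + E, 1 + (-1 : ℤ) • E, by
      have := key 1 (-1); simpa using this, by
      have := key (-1) 1; simpa using this⟩ with hu
  have hcoe : ∀ c : ℤ, ((u ^ c : (MM n)ˣ) : MM n) = 1 + c • E := by
    intro c
    induction c using Int.induction_on with
    | zero => simp
    | succ k ih =>
      rw [zpow_add_one, Units.val_mul, ih]
      have : (u : MM n) = 1 + (1 : ℤ) • E := by simp [hu]
      rw [this, key]
    | pred k ih =>
      rw [zpow_sub_one, Units.val_mul, ih]
      have : ((u⁻¹ : (MM n)ˣ) : MM n) = 1 + (-1 : ℤ) • E := rfl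
      rw [this, key]
      ring_nf
  have h1 : (1 + E) ^ c = ((u : MM n)) ^ c := by norm_num [hu]
  rw [h1, ← Matrix.coe_units_zpow, hcoe]

lemma sum_range'_eq {M : Type*} [AddCommMonoid M] (f : ℕ → M) (a m : ℕ) :
    ((List.range' a m).map f).sum = ∑ k ∈ Finset.Ico a (a + m), f k := by
  rw [Nat.Ico_eq_range']
  simp [Finset.sum, Nat.add_sub_cancel_left]

lemma mul_list_sum_zero {n : ℕ} (A : MM n) (l : List (MM n))
    (h : ∀ B ∈ l, A * B = 0) : A * l.sum = 0 := by
  induction l with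
  | nil => simp
  | cons B t ih =>
    simp only [List.sum_cons, mul_add]
    rw [h B (by simp), ih fun C hC => h C (by simp [hC])]
    simp

lemma prod_one_add {n : ℕ} (l : List (MM n))
    (h : ∀ A ∈ l, ∀ B ∈ l, A * B = 0) :
    (l.map fun A => 1 + A).prod = 1 + l.sum := by
  induction l with
  | nil => simp
  | cons B t ih =>
    simp only [List.map_cons, List.prod_cons, List.sum_cons]
    rw [ih fun A hA B hB => h A (by simp [hA]) B (by simp [hB])]
    have hBt : B * t.sum = 0 :=
      mul_list_sum_zero B t fun C hC => h B (by simp) C (by simp [hC])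
    noncomm_ring [hBt]

lemma xProd_eq {n : ℕ} (hn : 3 ≤ n) (p : ℕ → ℤ) :
    ((List.range' 2 (n - 2)).map fun j => xMat n j ^ p j).prod =
      1 + ∑ k ∈ Finset.Ico 2 n, p k • eMat n 1 k := by
  have hmap : ((List.range' 2 (n - 2)).map fun j => xMat n j ^ p j) =
      ((List.range' 2 (n - 2)).map fun j => p j • eMat n 1 j).map fun A => 1 + A := by
    rw [List.map_map]
    apply List.map_congr_left
    intro j hj
    rw [List.mem_range'_1] at hj
    simp only [Function.comp]
    rw [xMat, one_add_zpow _ (eMat_mul_of_ne (by omega) _ _)]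
  rw [hmap, prod_one_add]
  · rw [sum_range'_eq]
    have : 2 + (n - 2) = n := by omega
    rw [this]
  · intro A hA B hB
    simp only [List.mem_map, List.mem_range'_1] at hA hB
    obtain ⟨a, ha, rfl⟩ := hA
    obtain ⟨b, hb, rfl⟩ := hB
    rw [Matrix.smul_mul, Matrix.mul_smul, eMat_mul_of_ne (by omega), smul_zero, smul_zero]

lemma yProd_eq {n : ℕ} (hn : 3 ≤ n) (q : ℕ → ℤ) :
    ((List.range' 2 (n - 2)).map fun i => yMat n i ^ q i).prod =
      1 + ∑ k ∈ Finset.Ico 2 n, q k • eMat n k n := by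
  have hmap : ((List.range' 2 (n - 2)).map fun i => yMat n i ^ q i) =
      ((List.range' 2 (n - 2)).map fun i => q i • eMat n i n).map fun A => 1 + A := by
    rw [List.map_map]
    apply List.map_congr_left
    intro j hj
    rw [List.mem_range'_1] at hj
    simp only [Function.comp]
    rw [yMat, one_add_zpow _ (eMat_mul_of_ne (by omega) _ _)]
  rw [hmap, prod_one_add]
  · rw [sum_range'_eq]
    have : 2 + (n - 2) = n := by omega
    rw [this]
  · intro A hA B hB
    simp only [List.mem_map, List.mem_range'_1] at hA hB
    obtain ⟨a, ha, rfl⟩ := hA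
    obtain ⟨b, hb, rfl⟩ := hB
    rw [Matrix.smul_mul, Matrix.mul_smul, eMat_mul_of_ne (by omega), smul_zero, smul_zero]

lemma sum_smul_mul_zero {n : ℕ} (s : Finset ℕ) (c : ℕ → ℤ) (F : ℕ → MM n) (B : MM n)
    (h : ∀ k ∈ s, F k * B = 0) : (∑ k ∈ s, c k • F k) * B = 0 := by
  rw [Finset.sum_mul]
  apply Finset.sum_eq_zero
  intro k hk
  rw [Matrix.smul_mul, h k hk, smul_zero]

lemma mul_sum_smul_zero {n : ℕ} (s : Finset ℕ) (c : ℕ → ℤ) (F : ℕ → MM n) (B : MM n)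
    (h : ∀ k ∈ s, B * F k = 0) : B * (∑ k ∈ s, c k • F k) = 0 := by
  rw [Finset.mul_sum]
  apply Finset.sum_eq_zero
  intro k hk
  rw [Matrix.mul_smul, h k hk, smul_zero]

lemma sum_smul_mul_single {n : ℕ} (s : Finset ℕ) (c : ℕ → ℤ) (F : ℕ → MM n) (B : MM n)
    (a : ℕ) (ha : a ∈ s) (h0 : ∀ k ∈ s, k ≠ a → F k * B = 0) :
    (∑ k ∈ s, c k • F k) * B = c a • (F a * B) := by
  rw [Finset.sum_mul, Finset.sum_eq_single a]
  · rw [Matrix.smul_mul]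
  · intro k hk hka
    rw [Matrix.smul_mul, h0 k hk hka, smul_zero]
  · intro h; exact absurd ha h

lemma mul_sum_smul_single {n : ℕ} (s : Finset ℕ) (c : ℕ → ℤ) (F : ℕ → MM n) (B : MM n)
    (a : ℕ) (ha : a ∈ s) (h0 : ∀ k ∈ s, k ≠ a → B * F k = 0) :
    B * (∑ k ∈ s, c k • F k) = c a • (B * F a) := by
  rw [Finset.mul_sum, Finset.sum_eq_single a]
  · rw [Matrix.mul_smul]
  · intro k hk hka
    rw [Matrix.mul_smul, h0 k hk hka, smul_zero]
  · intro h; exact absurd ha h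

lemma nfWord_eq {n : ℕ} (hn : 3 ≤ n) (p q : ℕ → ℤ) (r : ℤ) :
    nfWord n p q r =
      1 + (∑ k ∈ Finset.Ico 2 n, p k • eMat n 1 k)
        + (∑ k ∈ Finset.Ico 2 n, q k • eMat n k n)
        + r • eMat n 1 n + (∑ k ∈ Finset.Ico 2 n, p k * q k) • eMat n 1 n := by
  rw [nfWord, xProd_eq hn, yProd_eq hn, zMat,
    one_add_zpow _ (eMat_mul_of_ne (by omega) _ _)]
  set P := ∑ k ∈ Finset.Ico 2 n, p k • eMat n 1 k with hP
  set Q := ∑ k ∈ Finset.Ico 2 n, q k • eMat n k n with hQ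
  have f1 : P * Q = (∑ k ∈ Finset.Ico 2 n, p k * q k) • eMat n 1 n := by
    rw [hP, Finset.sum_mul]
    rw [show (∑ k ∈ Finset.Ico 2 n, p k * q k) • eMat n 1 n
        = ∑ k ∈ Finset.Ico 2 n, (p k * q k) • eMat n 1 n from Finset.sum_smul]
    apply Finset.sum_congr rfl
    intro k hk
    rw [Finset.mem_Ico] at hk
    rw [Matrix.smul_mul, hQ, mul_sum_smul_single _ _ _ _ k (by rw [Finset.mem_Ico]; omega)]
    · rw [eMat_mul_self (by omega) (by omega), smul_smul]
    · intro m hm hmk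
      exact eMat_mul_of_ne (fun h => hmk h.symm) _ _
  have f2 : P * eMat n 1 n = 0 := by
    apply sum_smul_mul_zero
    intro k hk
    rw [Finset.mem_Ico] at hk
    exact eMat_mul_of_ne (by omega) _ _
  have f3 : Q * eMat n 1 n = 0 := by
    apply sum_smul_mul_zero
    intro k hk
    exact eMat_mul_of_ne (by omega) _ _
  have f4 : eMat n 1 n * eMat n 1 n = 0 := eMat_mul_of_ne (by omega) _ _
  simp only [mul_add, add_mul, mul_one, one_mul, f1, f2, f3, f4, Matrix.mul_smul,
    Matrix.smul_mul, smul_zero, mul_zero, zero_mul, add_zero, smul_smul]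
  abel

/-- For `1 < i < j < n` (1-based), the conjugate of the normal form element
`w = x_2^{p_2} ⋯ x_{n-1}^{p_{n-1}} · y_2^{q_2} ⋯ y_{n-1}^{q_{n-1}} · z^r` by
`1 + e_{ij}` is the normal form element with exponents `p'_j = p_j + p_i`,
`q'_i = q_i - q_j`, all other exponents (and `r`) unchanged. -/
theorem conjugation_action_on_Hn (n : ℕ) (hn : 3 ≤ n) (i j : ℕ)
    (hi : 1 < i) (hij : i < j) (hj : j < n) (p q : ℕ → ℤ) (r : ℤ) :
    (1 + eMat n i j)⁻¹ * nfWord n p q r * (1 + eMat n i j) =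
      nfWord n (fun m => if m = j then p j + p i else p m)
        (fun m => if m = i then q i - q j else q m) r := by
  have hiI : i ∈ Finset.Ico 2 n := by rw [Finset.mem_Ico]; omega
  have hjI : j ∈ Finset.Ico 2 n := by rw [Finset.mem_Ico]; omega
  set G := eMat n i j with hG
  set E1 := eMat n 1 j with hE1
  set E2 := eMat n i n with hE2
  set Z0 := eMat n 1 n with hZ0
  set P := ∑ k ∈ Finset.Ico 2 n, p k • eMat n 1 k with hP
  set Q := ∑ k ∈ Finset.Ico 2 n, q k • eMat n k n with hQ
  have f11 : G * G = 0 := eMat_mul_of_ne (by omega) _ _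
  have hinv : (1 + G)⁻¹ = 1 - G := by
    apply Matrix.inv_eq_right_inv
    have : (1 + G) * (1 - G) = 1 - G * G := by noncomm_ring
    rw [this, f11, sub_zero]
  -- rewrite defs of the two nfWords
  rw [hinv, nfWord_eq hn, nfWord_eq hn]
  rw [← hP, ← hQ, ← hZ0]
  -- identify the primed sums
  have hP' : (∑ k ∈ Finset.Ico 2 n, (if k = j then p j + p i else p k) • eMat n 1 k)
      = P + p i • E1 := by
    have : ∀ k ∈ Finset.Ico 2 n, (if k = j then p j + p i else p k) • eMat n 1 k
        = p k • eMat n 1 k + (if k = j then p i • E1 else 0) := by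
      intro k _
      split_ifs with h
      · subst h; rw [add_smul, hE1]
      · rw [add_zero]
    rw [Finset.sum_congr rfl this, Finset.sum_add_distrib, Finset.sum_ite_eq' _ j, if_pos hjI, hP]
  have hQ' : (∑ k ∈ Finset.Ico 2 n, (if k = i then q i - q j else q k) • eMat n k n)
      = Q + (-(q j)) • E2 := by
    have : ∀ k ∈ Finset.Ico 2 n, (if k = i then q i - q j else q k) • eMat n k n
        = q k • eMat n k n + (if k = i then (-(q j)) • E2 else 0) := by
      intro k _
      split_ifs with h
      · subst h; rw [sub_smul, sub_eq_add_neg, neg_smul, hE2]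
      · rw [add_zero]
    rw [Finset.sum_congr rfl this, Finset.sum_add_distrib, Finset.sum_ite_eq' _ i, if_pos hiI, hQ]
  have hs' : (∑ k ∈ Finset.Ico 2 n, (if k = j then p j + p i else p k) *
      (if k = i then q i - q j else q k)) = ∑ k ∈ Finset.Ico 2 n, p k * q k := by
    have : ∀ k ∈ Finset.Ico 2 n, (if k = j then p j + p i else p k) *
        (if k = i then q i - q j else q k)
        = p k * q k + ((if k = j then p i * q j else 0) + (if k = i then -(p i * q j) else 0)) := by
      intro k _
      by_cases h1 : k = j
      · subst h1
        rw [if_pos rfl, if_pos rfl, if_neg (by omega), if_neg (by omega)]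
        ring
      · by_cases h2 : k = i
        · subst h2
          rw [if_neg h1, if_pos rfl, if_neg h1, if_pos rfl]
          ring
        · rw [if_neg h1, if_neg h2, if_neg h1, if_neg h2]
          ring
    rw [Finset.sum_congr rfl this, Finset.sum_add_distrib, Finset.sum_add_distrib,
      Finset.sum_ite_eq' _ j, if_pos hjI, Finset.sum_ite_eq' _ i, if_pos hiI]
    ring
  rw [hP', hQ', hs']
  -- multiplication facts
  have f1 : P * G = p i • E1 := by
    rw [hP, sum_smul_mul_single _ _ _ _ i hiI]
    · rw [hG, eMat_mul_self (by omega) (by omega), hE1]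
    · intro k _ hk
      exact eMat_mul_of_ne hk _ _
  have f2 : Q * G = 0 := by
    apply sum_smul_mul_zero
    intro k _
    exact eMat_mul_of_ne (by omega) _ _
  have f3 : Z0 * G = 0 := eMat_mul_of_ne (by omega) _ _
  have f4 : G * P = 0 := by
    apply mul_sum_smul_zero
    intro k _
    exact eMat_mul_of_ne (by omega) _ _
  have f5 : G * Q = q j • E2 := by
    rw [hQ, mul_sum_smul_single _ _ _ _ j hjI]
    · rw [hG, eMat_mul_self (by omega) (by omega), hE2]
    · intro k _ hk
      exact eMat_mul_of_ne (fun h => hk h.symm) _ _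
  have f6 : G * Z0 = 0 := eMat_mul_of_ne (by omega) _ _
  have f7 : E2 * G = 0 := eMat_mul_of_ne (by omega) _ _
  have f8 : G * E1 = 0 := eMat_mul_of_ne (by omega) _ _
  have f9 : E2 * G = 0 := eMat_mul_of_ne (by omega) _ _
  simp only [mul_add, add_mul, sub_mul, mul_sub, mul_one, one_mul, f1, f2, f3, f4, f5, f6,
    f7, f8, f9, f11, Matrix.mul_smul, Matrix.smul_mul, smul_zero, mul_zero, zero_mul,
    add_zero, zero_add, smul_smul]
  abel_nf
  rw [smul_assoc]
  abel
end

section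
/- Let Σ be a type and let A, B ⊆ Σ be disjoint sets of letters. Let m, k ≥ 1, let L_1, …, L_m be languages over Σ each consisting only of words all of whose letters lie in A, and let M_1, …, M_k be languages over Σ each consisting only of words all of whose letters lie in B. Set L = ∩_{i=1}^m L_i and M = ∩_{j=1}^k M_j. Then the concatenation satisfies L·M = ∩_{i=1}^m ∩_{j=1}^k (L_i · M_j). -/
/-!
A word of `(⋂ᵢ Lᵢ)(⋂ⱼ Mⱼ)` lies in every `Lᵢ Mⱼ`. Conversely, since `A` and `B` are disjoint,
a word has at most one factorisation `uv` with `u` over `A` and `v` over `B`: `u` is the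
subword of its letters in `A`. So the factorisations of a word of `⋂ᵢ ⋂ⱼ Lᵢ Mⱼ` witnessing
membership in the various `Lᵢ Mⱼ` all coincide, and that common factorisation puts it in
`(⋂ᵢ Lᵢ)(⋂ⱼ Mⱼ)`.
-/

/-- The intersection of a family of languages, as a language. -/
def interLang {σ : Type} {ι : Sort*} (L : ι → Language σ) : Language σ := ⋂ i, L i

theorem mem_interLang {σ : Type} {ι : Sort*} {L : ι → Language σ} {x : List σ} :
    x ∈ interLang L ↔ ∀ i, x ∈ L i := Set.mem_iInter

open Classical in
theorem filter_mem_append_of_disjoint {σ : Type} {A B : Set σ} (hAB : Disjoint A B)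
    {u v : List σ} (hu : ∀ a ∈ u, a ∈ A) (hv : ∀ a ∈ v, a ∈ B) :
    (u ++ v).filter (· ∈ A) = u := by
  rw [List.filter_append, List.filter_eq_self.mpr (by simpa using hu),
    List.filter_eq_nil_iff.mpr fun a ha => by simpa using hAB.notMem_of_mem_right (hv a ha),
    List.append_nil]

theorem append_inj_of_disjoint {σ : Type} {A B : Set σ} (hAB : Disjoint A B)
    {u v u' v' : List σ} (h : u ++ v = u' ++ v')
    (hu : ∀ a ∈ u, a ∈ A) (hv : ∀ a ∈ v, a ∈ B)
    (hu' : ∀ a ∈ u', a ∈ A) (hv' : ∀ a ∈ v', a ∈ B) : u = u' ∧ v = v' := by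
  classical
  have hleft : u = u' := by
    rw [← filter_mem_append_of_disjoint hAB hu hv, h,
      filter_mem_append_of_disjoint hAB hu' hv']
  subst hleft
  exact ⟨rfl, List.append_cancel_left h⟩

theorem interLang_mul_interLang_le {σ : Type} {ι κ : Sort*}
    (L : ι → Language σ) (M : κ → Language σ) :
    interLang L * interLang M ≤ interLang fun i => interLang fun j => L i * M j := by
  intro x hx
  obtain ⟨u, hu, v, hv, rfl⟩ := Language.mem_mul.mp hx
  exact mem_interLang.mpr fun i => mem_interLang.mpr fun j =>
    Language.append_mem_mul (mem_interLang.mp hu i) (mem_interLang.mp hv j)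

theorem interLang_mul_interLang_of_disjoint {σ : Type} {ι κ : Sort*} [Nonempty ι] [Nonempty κ]
    {A B : Set σ} (hAB : Disjoint A B) (L : ι → Language σ) (M : κ → Language σ)
    (hL : ∀ i, ∀ w ∈ L i, ∀ a ∈ w, a ∈ A) (hM : ∀ j, ∀ w ∈ M j, ∀ a ∈ w, a ∈ B) :
    interLang L * interLang M = interLang fun i => interLang fun j => L i * M j := by
  refine le_antisymm (interLang_mul_interLang_le L M) fun x hx' => ?_
  have hx i j : x ∈ L i * M j := mem_interLang.mp (mem_interLang.mp hx' i) j
  obtain ⟨i₀⟩ := ‹Nonempty ι›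
  obtain ⟨j₀⟩ := ‹Nonempty κ›
  obtain ⟨u, hu, v, hv, rfl⟩ := Language.mem_mul.mp (hx i₀ j₀)
  have factor_eq {i j} : ∃ u' ∈ L i, ∃ v' ∈ M j, u = u' ∧ v = v' := by
    obtain ⟨u', hu', v', hv', huv⟩ := Language.mem_mul.mp (hx i j)
    exact ⟨u', hu', v', hv', append_inj_of_disjoint hAB huv.symm
      (hL i₀ u hu) (hM j₀ v hv) (hL i u' hu') (hM j v' hv')⟩
  refine Language.append_mem_mul (mem_interLang.mpr fun i => ?_) (mem_interLang.mpr fun j => ?_)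
  · obtain ⟨u', hu', -, -, rfl, -⟩ := factor_eq (i := i) (j := j₀)
    exact hu'
  · obtain ⟨-, -, v', hv', -, rfl⟩ := factor_eq (i := i₀) (j := j)
    exact hv'

/-- If the languages `L_1, …, L_m` use only letters from `A` and the languages
`M_1, …, M_k` use only letters from `B`, where `A` and `B` are disjoint, then
`(⋂ᵢ Lᵢ) · (⋂ⱼ Mⱼ) = ⋂ᵢ ⋂ⱼ (Lᵢ · Mⱼ)`. -/
theorem inter_concat {σ : Type} (A B : Set σ) (hAB : Disjoint A B)
    (m k : ℕ) (hm : 1 ≤ m) (hk : 1 ≤ k)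
    (L : Fin m → Language σ) (M : Fin k → Language σ)
    (hL : ∀ i, ∀ w ∈ L i, ∀ a ∈ w, a ∈ A)
    (hM : ∀ j, ∀ w ∈ M j, ∀ a ∈ w, a ∈ B) :
    interLang L * interLang M = interLang fun i => interLang fun j => L i * M j := by
  have : Nonempty (Fin m) := ⟨⟨0, hm⟩⟩
  have : Nonempty (Fin k) := ⟨⟨0, hk⟩⟩
  exact interLang_mul_interLang_of_disjoint hAB L M hL hM
end

section
/- Let Σ be a type and let A, B ⊆ Σ be disjoint sets of letters. Let m, k ≥ 1, let L_1, …, L_m be languages over Σ each consisting only of nonempty words all of whose letters lie in A (so ε ∉ L_i for each i), and let M_1, …, M_k be languages over Σ each consisting only of nonempty words all of whose letters lie in B (so ε ∉ M_j for each j). Set L = ∩_{i=1}^m L_i and M = ∩_{j=1}^k M_j. Then the Kleene stars satisfy (L·M)* = ∩_{i=1}^m ∩_{j=1}^k (L_i · M_j)*. -/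
open Computability

section aux

variable {σ : Type} {A B : Set σ}

lemma split_unique :
    ∀ (u u' x x' : List σ), (∀ a ∈ u, a ∈ A) → (∀ a ∈ u', a ∈ A) →
    (∀ c ∈ x.head?, c ∉ A) → (∀ c ∈ x'.head?, c ∉ A) →
    u ++ x = u' ++ x' → u = u' ∧ x = x' := by
  intro u
  induction u with
  | nil =>
    intro u' x x' _ hu' hx hx' heq
    cases u' with
    | nil => simpa using heq
    | cons c t =>
      exfalso
      simp only [List.nil_append, List.cons_append] at heq
      subst heq
      exact hx c rfl (hu' c (List.mem_cons_self))
  | cons c t ih =>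
    intro u' x x' hu hu' hx hx' heq
    cases u' with
    | nil =>
      exfalso
      simp only [List.nil_append, List.cons_append] at heq
      exact hx' c (by rw [← heq]; rfl) (hu c (List.mem_cons_self))
    | cons c' t' =>
      simp only [List.cons_append, List.cons.injEq] at heq
      obtain ⟨rfl, heq⟩ := heq
      obtain ⟨h1, h2⟩ := ih t' x x' (fun a ha => hu a (List.mem_cons_of_mem _ ha))
        (fun a ha => hu' a (List.mem_cons_of_mem _ ha)) hx hx' heq
      exact ⟨by rw [h1], h2⟩

def goodPair (A B : Set σ) (p : List σ × List σ) : Prop :=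
  p.1 ≠ [] ∧ (∀ a ∈ p.1, a ∈ A) ∧ p.2 ≠ [] ∧ (∀ a ∈ p.2, a ∈ B)

def join2 (ps : List (List σ × List σ)) : List σ :=
  (ps.map fun p => p.1 ++ p.2).flatten

lemma join2_head_mem_A {ps : List (List σ × List σ)}
    (hps : ∀ p ∈ ps, goodPair A B p) :
    ∀ c ∈ (join2 ps).head?, c ∈ A := by
  intro c hc
  cases ps with
  | nil => simp [join2] at hc
  | cons p ps =>
    obtain ⟨h1, h2, h3, h4⟩ := hps p (List.mem_cons_self)
    cases hp : p.1 with
    | nil => exact absurd hp h1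
    | cons a t =>
      have : (join2 (p :: ps)).head? = some a := by
        simp [join2, hp]
      rw [this] at hc
      simp only [Option.mem_def, Option.some.injEq] at hc
      subst hc
      exact h2 _ (by rw [hp]; exact List.mem_cons_self)

lemma join2_unique (hAB : Disjoint A B) :
    ∀ (ps ps' : List (List σ × List σ)), (∀ p ∈ ps, goodPair A B p) →
    (∀ p ∈ ps', goodPair A B p) → join2 ps = join2 ps' → ps = ps' := by
  intro ps
  induction ps with
  | nil =>
    intro ps' _ hps' heq
    cases ps' with
    | nil => rfl
    | cons p t =>
      exfalso
      obtain ⟨h1, _, _, _⟩ := hps' p (List.mem_cons_self)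
      have : join2 (p :: t) = [] := heq.symm
      simp [join2] at this
      exact h1 this.1
  | cons p ps ih =>
    intro ps' hps hqall heq
    cases ps' with
    | nil =>
      exfalso
      obtain ⟨h1, _, _, _⟩ := hps p (List.mem_cons_self)
      simp [join2] at heq
      exact h1 heq.1
    | cons q qs =>
      obtain ⟨hp1, hp2, hp3, hp4⟩ := hps p (List.mem_cons_self)
      obtain ⟨hq1, hq2, hq3, hq4⟩ := hqall q (List.mem_cons_self)
      have heq' : p.1 ++ (p.2 ++ join2 ps) = q.1 ++ (q.2 ++ join2 qs) := by
        simpa [join2, List.append_assoc] using heq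
      have headB : ∀ (r : List σ × List σ) (rs : List (List σ × List σ)),
          r.2 ≠ [] → (∀ a ∈ r.2, a ∈ B) →
          ∀ c ∈ (r.2 ++ join2 rs).head?, c ∉ A := by
        intro r rs h1 h2 c hc
        cases hr : r.2 with
        | nil => exact absurd hr h1
        | cons b t =>
          rw [hr] at hc
          simp only [List.cons_append, List.head?_cons, Option.mem_def,
            Option.some.injEq] at hc
          intro hcA
          exact hAB.le_bot ⟨hcA, h2 c (by rw [hr, ← hc]; exact List.mem_cons_self)⟩
      obtain ⟨e1, e2⟩ := split_unique p.1 q.1 _ _ hp2 hq2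
        (headB p ps hp3 hp4) (headB q qs hq3 hq4) heq'
      have hpsT : ∀ r ∈ ps, goodPair A B r := fun r hr => hps r (List.mem_cons_of_mem _ hr)
      have hqsT : ∀ r ∈ qs, goodPair A B r := fun r hr => hqall r (List.mem_cons_of_mem _ hr)
      have headA : ∀ (rs : List (List σ × List σ)),
          (∀ r ∈ rs, goodPair A B r) → ∀ c ∈ (join2 rs).head?, c ∉ B := by
        intro rs hrs c hc hcB
        exact hAB.le_bot ⟨join2_head_mem_A hrs c hc, hcB⟩
      obtain ⟨f1, f2⟩ := split_unique (A := B) p.2 q.2 (join2 ps) (join2 qs)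
        hp4 hq4 (headA ps hpsT) (headA qs hqsT) e2
      have : p = q := Prod.ext e1 f1
      rw [this, ih qs hpsT hqsT f2]

lemma mem_mul_kstar_iff (P Q : Language σ) (w : List σ) :
    w ∈ (P * Q)∗ ↔ ∃ ps : List (List σ × List σ),
      (∀ p ∈ ps, p.1 ∈ P ∧ p.2 ∈ Q) ∧ w = join2 ps := by
  rw [Language.mem_kstar]
  constructor
  · rintro ⟨S, rfl, hS⟩
    induction S with
    | nil => exact ⟨[], by simp, rfl⟩
    | cons y S ih =>
      obtain ⟨u, hu, v, hv, huv⟩ := Language.mem_mul.mp (hS y (List.mem_cons_self))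
      obtain ⟨ps, h1, h2⟩ := ih (fun z hz => hS z (List.mem_cons_of_mem _ hz))
      refine ⟨(u, v) :: ps, ?_, ?_⟩
      · rintro p hp
        rcases List.mem_cons.mp hp with rfl | hp
        · exact ⟨hu, hv⟩
        · exact h1 p hp
      · simp [join2, ← huv] at h2 ⊢
        rw [← h2]
  · rintro ⟨ps, h1, rfl⟩
    refine ⟨ps.map fun p => p.1 ++ p.2, by simp [join2], ?_⟩
    intro y hy
    obtain ⟨p, hp, rfl⟩ := List.mem_map.mp hy
    exact Language.mem_mul.mpr ⟨p.1, (h1 p hp).1, p.2, (h1 p hp).2, rfl⟩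

end aux

/-- If the languages `L_1, …, L_m` consist of nonempty words using only letters from
`A` and the languages `M_1, …, M_k` consist of nonempty words using only letters from
`B`, where `A` and `B` are disjoint, then
`((⋂ᵢ Lᵢ) · (⋂ⱼ Mⱼ))* = ⋂ᵢ ⋂ⱼ (Lᵢ · Mⱼ)*`. -/
theorem inter_concat_kstar {σ : Type} (A B : Set σ) (hAB : Disjoint A B)
    (m k : ℕ) (hm : 1 ≤ m) (hk : 1 ≤ k)
    (L : Fin m → Language σ) (M : Fin k → Language σ)
    (hL : ∀ i, ∀ w ∈ L i, w ≠ [] ∧ ∀ a ∈ w, a ∈ A)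
    (hM : ∀ j, ∀ w ∈ M j, w ≠ [] ∧ ∀ a ∈ w, a ∈ B) :
    (interLang L * interLang M)∗ = interLang fun i => interLang fun j => (L i * M j)∗ := by
  ext w
  constructor
  · intro hw
    refine Set.mem_iInter.mpr fun i => Set.mem_iInter.mpr fun j => ?_
    have hsub : interLang L * interLang M ≤ L i * M j :=
      mul_le_mul' (Set.iInter_subset _ i) (Set.iInter_subset _ j)
    exact kstar_mono hsub hw
  · intro hw'
    have hw : ∀ (i : Fin m) (j : Fin k), w ∈ (L i * M j)∗ := fun i j =>
      Set.mem_iInter.mp (Set.mem_iInter.mp hw' i) j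
    have i0 : Fin m := ⟨0, hm⟩
    have j0 : Fin k := ⟨0, hk⟩
    obtain ⟨ps, h1, rfl⟩ := (mem_mul_kstar_iff (L i0) (M j0) w).mp (hw i0 j0)
    have good : ∀ (i : Fin m) (j : Fin k), ∀ p ∈ ps, p.1 ∈ L i ∧ p.2 ∈ M j := by
      intro i j
      obtain ⟨qs, hq1, hq2⟩ := (mem_mul_kstar_iff (L i) (M j) _).mp (hw i j)
      have hgood : ∀ p ∈ ps, goodPair A B p := fun p hp =>
        ⟨(hL i0 p.1 (h1 p hp).1).1, (hL i0 p.1 (h1 p hp).1).2,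
         (hM j0 p.2 (h1 p hp).2).1, (hM j0 p.2 (h1 p hp).2).2⟩
      have hgood' : ∀ p ∈ qs, goodPair A B p := fun p hp =>
        ⟨(hL i p.1 (hq1 p hp).1).1, (hL i p.1 (hq1 p hp).1).2,
         (hM j p.2 (hq1 p hp).2).1, (hM j p.2 (hq1 p hp).2).2⟩
      have := join2_unique hAB ps qs hgood hgood' hq2
      subst this
      exact hq1
    apply (mem_mul_kstar_iff _ _ _).mpr
    refine ⟨ps, ?_, rfl⟩
    intro p hp
    constructor
    · exact Set.mem_iInter.mpr fun i => (good i j0 p hp).1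
    · exact Set.mem_iInter.mpr fun j => (good i0 j p hp).2
end

section
/- Let G and G' be groups, let A and A' be types (disjoint alphabets), and let π : A* → G and π' : A'* → G' be monoid homomorphisms from the respective free monoids. Suppose L ⊆ A* is a set of words such that π restricted to L is a bijection onto G, with ε ∈ L and π(ε) = 1; similarly suppose L' ⊆ A'* maps bijectively onto G' under π', with ε ∈ L' and π'(ε) = 1. Regard words over A and over A' as words over the disjoint union A ⊔ A', and let ev : (A ⊔ A')* → G * G' be the monoid homomorphism into the free product G * G' induced by π, π' and the canonical inclusions of G and G' into G * G'. Then ev restricted to the language N = L · ((L' − {ε}) · (L − {ε}))* · L' is a bijection from N onto G * G'. -/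
open Computability

/-- The evaluation homomorphism `(A ⊔ A')* →* G ∗ G'` induced by `π : A* →* G`,
`π' : A'* →* G'` and the canonical inclusions of `G` and `G'` into the free
product `G ∗ G'`. -/
def evHom {A A' G G' : Type} [Group G] [Group G']
    (π : FreeMonoid A →* G) (π' : FreeMonoid A' →* G') :
    FreeMonoid (A ⊕ A') →* Monoid.Coprod G G' :=
  FreeMonoid.lift fun s =>
    Sum.elim (fun a => Monoid.Coprod.inl (π (FreeMonoid.of a)))
      (fun b => Monoid.Coprod.inr (π' (FreeMonoid.of b))) s

/-- A language over `A`, viewed as a language over the disjoint union `A ⊕ A'`. -/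
def embLeft {A A' : Type} (L : Set (List A)) : Language (A ⊕ A') :=
  (fun w : List A => w.map Sum.inl) '' L

/-- A language over `A'`, viewed as a language over the disjoint union `A ⊕ A'`. -/
def embRight {A A' : Type} (L' : Set (List A')) : Language (A ⊕ A') :=
  (fun w : List A' => w.map Sum.inr) '' L'



open Monoid

namespace NFAux

variable {G G' : Type} [Group G] [Group G']

abbrev Fam (G G' : Type) : Bool → Type := fun b => cond b G G'

instance famGroup : ∀ b, Group (Fam G G' b)
  | true => ‹Group G›
  | false => ‹Group G'›

/-- The natural injection `G ∗ G' →* CoprodI (Fam G G')`. -/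
def toI : Coprod G G' →* CoprodI (Fam G G') :=
  Coprod.lift (CoprodI.of (M := Fam G G') (i := true)) (CoprodI.of (M := Fam G G') (i := false))

def fams (G G' : Type) [Group G] [Group G'] : ∀ b, Fam G G' b →* Coprod G G'
  | true => Coprod.inl
  | false => Coprod.inr

def fromI : CoprodI (Fam G G') →* Coprod G G' :=
  CoprodI.lift (fams G G')

lemma fromI_toI (x : Coprod G G') : fromI (toI x) = x := by
  have : (fromI.comp (toI : Coprod G G' →* _)) = MonoidHom.id _ := by
    apply Coprod.hom_ext <;> ext x
    · show fromI (toI (Coprod.inl x)) = Coprod.inl x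
      rw [toI, Coprod.lift_apply_inl]; exact CoprodI.lift_of (fams G G') (i := true) x
    · show fromI (toI (Coprod.inr x)) = Coprod.inr x
      rw [toI, Coprod.lift_apply_inr]; exact CoprodI.lift_of (fams G G') (i := false) x
  exact congrArg (fun f => DFunLike.coe f x) this

lemma toI_injective : Function.Injective (toI (G := G) (G' := G')) :=
  fun a b h => by rw [← fromI_toI a, ← fromI_toI b, h]

/-- Normal form value. -/
def Phi (g : G) (ps : List (G' × G)) (g' : G') : Coprod G G' :=
  Coprod.inl g * (ps.map fun p => Coprod.inr p.1 * Coprod.inl p.2).prod * Coprod.inr g'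

def Good (ps : List (G' × G)) : Prop := ∀ p ∈ ps, p.1 ≠ 1 ∧ p.2 ≠ 1

lemma phi_surj (x : Coprod G G') : ∃ g ps g', Good ps ∧ Phi g ps g' = x := by
  induction x using Coprod.induction_on' with
  | one => exact ⟨1, [], 1, by simp [Good], by simp [Phi]⟩
  | inl_mul m x ih =>
    obtain ⟨g, ps, g', hgood, rfl⟩ := ih
    exact ⟨m * g, ps, g', hgood, by simp [Phi, mul_assoc]⟩
  | inr_mul n x ih =>
    obtain ⟨g, ps, g', hgood, rfl⟩ := ih
    by_cases hn : n = 1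
    · exact ⟨g, ps, g', hgood, by simp [hn]⟩
    by_cases hg : g = 1
    · subst hg
      match ps, hgood with
      | [], _ => exact ⟨1, [], n * g', by simp [Good], by simp [Phi, mul_assoc]⟩
      | q :: ps', hgood =>
        by_cases hq : n * q.1 = 1
        · refine ⟨q.2, ps', g', fun p hp => hgood p (List.mem_cons_of_mem _ hp), ?_⟩
          have h1 : (Coprod.inr n : Coprod G G') * Coprod.inr q.1 = 1 := by
            rw [← map_mul, hq, map_one]
          simp [Phi, ← mul_assoc, h1]
        · refine ⟨1, (n * q.1, q.2) :: ps', g',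
            fun p hp => by
              rcases List.mem_cons.1 hp with rfl | hp
              · exact ⟨hq, (hgood q (List.mem_cons_self)).2⟩
              · exact hgood p (List.mem_cons_of_mem _ hp), ?_⟩
          simp [Phi, map_mul, mul_assoc]
    · refine ⟨1, (n, g) :: ps, g', ?_, ?_⟩
      · intro p hp
        rcases List.mem_cons.1 hp with rfl | hp
        · exact ⟨hn, hg⟩
        · exact hgood p hp
      · simp [Phi, mul_assoc]


open scoped Classical in
noncomputable def optT (G' : Type) [Group G'] (g : G) : List (Σ b, Fam G G' b) :=
  if g = 1 then [] else [⟨true, g⟩]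

open scoped Classical in
noncomputable def optF (G : Type) [Group G] (g' : G') : List (Σ b, Fam G G' b) :=
  if g' = 1 then [] else [⟨false, g'⟩]

def mid (ps : List (G' × G)) : List (Σ b, Fam G G' b) :=
  ps.flatMap fun p => [⟨false, p.1⟩, ⟨true, p.2⟩]

noncomputable def wl (g : G) (ps : List (G' × G)) (g' : G') : List (Σ b, Fam G G' b) :=
  optT G' g ++ (mid ps ++ optF G g')

lemma mid_cons (p : G' × G) (ps : List (G' × G)) :
    mid (p :: ps) = ⟨false, p.1⟩ :: ⟨true, p.2⟩ :: mid ps := by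
  simp [mid]

lemma head_false (ps : List (G' × G)) (g' : G') :
    ∀ x ∈ (mid ps ++ optF G g').head?, x.1 = false := by
  cases ps with
  | nil =>
    simp only [mid, List.flatMap_nil, List.nil_append, optF]
    split
    · simp
    · simp
  | cons p ps => simp [mid_cons]

lemma chain_wl (g : G) (ps : List (G' × G)) (g' : G') :
    (wl g ps g').Chain' fun l l' => l.1 ≠ l'.1 := by
  have base : ∀ ps : List (G' × G), (mid ps ++ optF G g').Chain' (fun l l' => l.1 ≠ l'.1) := by
    intro ps
    induction ps with
    | nil =>
      simp only [mid, List.flatMap_nil, List.nil_append, optF]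
      split
      · simp [List.Chain']
      · simp [List.Chain']
    | cons p ps ih =>
      rw [mid_cons]
      refine List.IsChain.cons_cons (by simp) (List.isChain_cons.2 ⟨?_, ih⟩)
      intro y hy
      have := head_false ps g' y hy
      simp [this]
  rw [wl, optT]
  split
  · simpa using base ps
  · refine List.isChain_cons.2 ⟨?_, base ps⟩
    intro y hy
    have := head_false ps g' y hy
    simp [this]

lemma ne_one_wl (g : G) (ps : List (G' × G)) (g' : G') (hps : Good ps) :
    ∀ l ∈ wl g ps g', l.2 ≠ 1 := by
  intro l hl
  rw [wl] at hl
  rcases List.mem_append.1 hl with h | h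
  · rw [optT] at h
    split at h
    · simp at h
    · rcases List.mem_singleton.1 h with rfl
      assumption
  rcases List.mem_append.1 h with h | h
  · rw [mid] at h
    simp only [List.mem_flatMap] at h
    obtain ⟨p, hp, hl⟩ := h
    rcases List.mem_cons.1 hl with rfl | hl
    · exact (hps p hp).1
    · rcases List.mem_singleton.1 hl with rfl
      exact (hps p hp).2
  · rw [optF] at h
    split at h
    · simp at h
    · rcases List.mem_singleton.1 h with rfl
      assumption

/-- The reduced word associated to a normal form. -/
noncomputable def theWord (g : G) (ps : List (G' × G)) (g' : G') (hps : Good ps) :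
    CoprodI.Word (Fam G G') where
  toList := wl g ps g'
  ne_one := ne_one_wl g ps g' hps
  chain_ne := chain_wl g ps g'

lemma optT_prod (g : G) :
    ((optT G' g).map fun l => (CoprodI.of l.2 : CoprodI (Fam G G'))).prod
      = CoprodI.of (i := true) g := by
  rw [optT]; split
  · subst ‹g = 1›; simp
  · simp only [List.map_cons, List.map_nil, List.prod_cons, List.prod_nil, mul_one]

lemma optF_prod (g' : G') :
    ((optF G g').map fun l => (CoprodI.of l.2 : CoprodI (Fam G G'))).prod
      = CoprodI.of (i := false) g' := by
  rw [optF]; split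
  · subst ‹g' = 1›; simp
  · simp only [List.map_cons, List.map_nil, List.prod_cons, List.prod_nil, mul_one]

lemma toI_inl (g : G) : toI (Coprod.inl g : Coprod G G') = CoprodI.of (i := true) g := by
  rw [toI]; exact Coprod.lift_apply_inl _ _ g

lemma toI_inr (g' : G') : toI (Coprod.inr g' : Coprod G G') = CoprodI.of (i := false) g' := by
  rw [toI]; exact Coprod.lift_apply_inr _ _ g'

lemma phi_cons (g : G) (p : G' × G) (ps : List (G' × G)) (g' : G') :
    Phi g (p :: ps) g' = Coprod.inl g * (Coprod.inr p.1 * Phi p.2 ps g') := by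
  simp [Phi, mul_assoc]

lemma prod_wl (g : G) (ps : List (G' × G)) (g' : G') (hps : Good ps) :
    ((wl g ps g').map fun l => (CoprodI.of l.2 : CoprodI (Fam G G'))).prod
      = toI (Phi g ps g') := by
  induction ps generalizing g with
  | nil =>
    rw [wl, mid]
    simp only [List.flatMap_nil, List.nil_append, List.map_append, List.prod_append,
      optT_prod, optF_prod]
    rw [Phi]
    simp only [List.map_nil, List.prod_nil, mul_one]
    rw [map_mul, toI_inl, toI_inr]
  | cons p ps ih =>
    have hp2 : p.2 ≠ 1 := (hps p (List.mem_cons_self)).2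
    have htail : Good ps := fun q hq => hps q (List.mem_cons_of_mem _ hq)
    have hsplit : wl g (p :: ps) g'
        = optT G' g ++ (⟨false, p.1⟩ :: wl p.2 ps g') := by
      rw [wl, wl, mid_cons, optT, optT, if_neg hp2]
      simp
    rw [hsplit, phi_cons, map_mul, map_mul, toI_inl, toI_inr]
    simp only [List.map_append, List.prod_append, List.map_cons, List.prod_cons, optT_prod]
    rw [ih p.2 htail]

lemma prod_injective :
    Function.Injective (CoprodI.Word.prod (M := Fam G G')) := by
  classical
  intro w1 w2 h
  have h1 := (CoprodI.Word.equiv (M := Fam G G')).symm.injective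
  exact h1 h

lemma sigma_fst_true_ne (g : G) (g' : G') :
    (⟨true, g⟩ : Σ b, Fam G G' b) ≠ ⟨false, g'⟩ := by
  intro h
  simpa using congrArg Sigma.fst h

lemma optF_inj (g' h' : G') (h : optF G g' = optF G h') : g' = h' := by
  rw [optF, optF] at h
  split at h <;> split at h <;> simp_all

lemma mid_optF_inj (ps qs : List (G' × G)) (g' h' : G')
    (h : mid ps ++ optF G g' = mid qs ++ optF G h') : ps = qs ∧ g' = h' := by
  induction ps generalizing qs with
  | nil =>
    cases qs with
    | nil => exact ⟨rfl, optF_inj _ _ (by simpa [mid] using h)⟩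
    | cons q qs =>
      exfalso
      have hlen := congrArg List.length h
      simp only [mid_cons, mid, List.flatMap_nil, List.nil_append, List.cons_append,
        List.length_cons, List.length_append, optF] at hlen
      split at hlen <;> split at hlen <;> simp at hlen <;> omega
  | cons p ps ih =>
    cases qs with
    | nil =>
      exfalso
      have hlen := congrArg List.length h
      simp only [mid_cons, mid, List.flatMap_nil, List.nil_append, List.cons_append,
        List.length_cons, List.length_append, optF] at hlen
      split at hlen <;> split at hlen <;> simp at hlen <;> omega
    | cons q qs =>
      rw [mid_cons, mid_cons] at h
      simp only [List.cons_append, List.cons.injEq, Sigma.mk.inj_iff, heq_eq_eq, true_and] at h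
      obtain ⟨h1, h2, h3⟩ := h
      obtain ⟨hps, hg⟩ := ih qs (by exact h3)
      refine ⟨?_, hg⟩
      cases p; cases q; simp_all

lemma wl_inj (g h : G) (ps qs : List (G' × G)) (g' h' : G')
    (heq : wl g ps g' = wl h qs h') : g = h ∧ ps = qs ∧ g' = h' := by
  rw [wl, wl, optT, optT] at heq
  split at heq <;> split at heq
  · subst_vars
    simp only [List.nil_append] at heq
    obtain ⟨h1, h2⟩ := mid_optF_inj _ _ _ _ heq
    exact ⟨rfl, h1, h2⟩
  · exfalso
    simp only [List.nil_append, List.singleton_append] at heq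
    have := head_false (G := G) (G' := G') ps g'
    rw [heq] at this
    simpa using this ⟨true, h⟩ (by simp)
  · exfalso
    simp only [List.nil_append, List.singleton_append] at heq
    have := head_false (G := G) (G' := G') qs h'
    rw [← heq] at this
    simpa using this ⟨true, g⟩ (by simp)
  · simp only [List.singleton_append, List.cons.injEq, Sigma.mk.inj_iff, heq_eq_eq,
      true_and] at heq
    obtain ⟨h1, h2⟩ := heq
    obtain ⟨h3, h4⟩ := mid_optF_inj _ _ _ _ h2
    exact ⟨h1, h3, h4⟩

lemma phi_inj {g h : G} {ps qs : List (G' × G)} {g' h' : G'}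
    (hps : Good ps) (hqs : Good qs) (heq : Phi g ps g' = Phi h qs h') :
    g = h ∧ ps = qs ∧ g' = h' := by
  have h1 : (theWord g ps g' hps).prod = (theWord h qs h' hqs).prod := by
    show ((wl g ps g').map fun l => (CoprodI.of l.2 : CoprodI (Fam G G'))).prod = _
    rw [prod_wl _ _ _ hps, heq, ← prod_wl _ _ _ hqs]
    rfl
  have h2 := prod_injective h1
  have h3 : wl g ps g' = wl h qs h' := congrArg CoprodI.Word.toList h2
  exact wl_inj _ _ _ _ _ _ h3

end NFAux

namespace NFAux

variable {A A' G G' : Type} [Group G] [Group G']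
variable (π : FreeMonoid A →* G) (π' : FreeMonoid A' →* G')

lemma ev_inl (l : List A) :
    evHom π π' (FreeMonoid.ofList (l.map Sum.inl)) = Coprod.inl (π (FreeMonoid.ofList l)) := by
  induction l with
  | nil => simp [FreeMonoid.ofList_nil]
  | cons a l ih =>
    rw [List.map_cons, FreeMonoid.ofList_cons, FreeMonoid.ofList_cons, map_mul, map_mul, ih]
    congr 1
    simp [evHom]

lemma ev_inr (l : List A') :
    evHom π π' (FreeMonoid.ofList (l.map Sum.inr)) = Coprod.inr (π' (FreeMonoid.ofList l)) := by
  induction l with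
  | nil => simp [FreeMonoid.ofList_nil]
  | cons a l ih =>
    rw [List.map_cons, FreeMonoid.ofList_cons, FreeMonoid.ofList_cons, map_mul, map_mul, ih]
    congr 1
    simp [evHom]

/-- The shape of one middle piece. -/
def piece (p : List A' × List A) : List (A ⊕ A') :=
  p.1.map Sum.inr ++ p.2.map Sum.inl

lemma ev_mid (pcs : List (List A' × List A)) :
    evHom π π' (FreeMonoid.ofList (pcs.flatMap piece))
      = ((pcs.map fun p => (π' (FreeMonoid.ofList p.1), π (FreeMonoid.ofList p.2))).map
          fun q => Coprod.inr q.1 * Coprod.inl q.2).prod := by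
  induction pcs with
  | nil => simp [FreeMonoid.ofList_nil]
  | cons p pcs ih =>
    rw [List.flatMap_cons, piece, List.append_assoc, FreeMonoid.ofList_append,
      FreeMonoid.ofList_append, map_mul, map_mul, ev_inl, ev_inr, ih]
    simp [mul_assoc]

lemma ev_decomp (l0 : List A) (pcs : List (List A' × List A)) (le : List A') :
    evHom π π' (FreeMonoid.ofList
        (l0.map Sum.inl ++ pcs.flatMap piece ++ le.map Sum.inr))
      = Phi (π (FreeMonoid.ofList l0))
          (pcs.map fun p => (π' (FreeMonoid.ofList p.1), π (FreeMonoid.ofList p.2)))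
          (π' (FreeMonoid.ofList le)) := by
  rw [FreeMonoid.ofList_append, FreeMonoid.ofList_append, map_mul, map_mul,
    ev_inl, ev_inr, ev_mid, Phi]

lemma decomp {L : Set (List A)} {L' : Set (List A')} {w : List (A ⊕ A')}
    (hw : w ∈ embLeft L *
        ((embRight L' \ {([] : List (A ⊕ A'))}) * (embLeft L \ {([] : List (A ⊕ A'))}))∗ *
        embRight L') :
    ∃ l0 ∈ L, ∃ le ∈ L', ∃ pcs : List (List A' × List A),
      (∀ p ∈ pcs, p.1 ∈ L' ∧ p.1 ≠ [] ∧ p.2 ∈ L ∧ p.2 ≠ []) ∧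
      w = l0.map Sum.inl ++ pcs.flatMap piece ++ le.map Sum.inr := by
  obtain ⟨u, hu, b, hb, rfl⟩ := Language.mem_mul.1 hw
  obtain ⟨a, ha, v, hv, rfl⟩ := Language.mem_mul.1 hu
  obtain ⟨l0, hl0, rfl⟩ := ha
  obtain ⟨le, hle, rfl⟩ := hb
  obtain ⟨S, rfl, hS⟩ := Language.mem_kstar.1 hv
  suffices h : ∃ pcs : List (List A' × List A),
      (∀ p ∈ pcs, p.1 ∈ L' ∧ p.1 ≠ [] ∧ p.2 ∈ L ∧ p.2 ≠ []) ∧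
      S.flatten = pcs.flatMap piece by
    obtain ⟨pcs, h1, h2⟩ := h
    exact ⟨l0, hl0, le, hle, pcs, h1, by rw [h2]⟩
  clear hw hu hv
  induction S with
  | nil => exact ⟨[], by simp, by simp⟩
  | cons y S ih =>
    obtain ⟨pcs, h1, h2⟩ := ih fun z hz => hS z (List.mem_cons_of_mem _ hz)
    have hy := hS y (List.mem_cons_self)
    obtain ⟨c, hc, d, hd, rfl⟩ := Language.mem_mul.1 hy
    obtain ⟨⟨l', hl', rfl⟩, hc2⟩ := hc
    obtain ⟨⟨l, hl, rfl⟩, hd2⟩ := hd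
    refine ⟨(l', l) :: pcs, ?_, ?_⟩
    · intro p hp
      rcases List.mem_cons.1 hp with rfl | hp
      · refine ⟨hl', ?_, hl, ?_⟩
        · intro h
          apply hc2
          have h' : l' = [] := h
          subst h'; exact rfl
        · intro h
          apply hd2
          have h' : l = [] := h
          subst h'; exact rfl
      · exact h1 p hp
    · rw [List.flatten_cons, h2, List.flatMap_cons, piece]

lemma recomp {L : Set (List A)} {L' : Set (List A')}
    (l0 : List A) (hl0 : l0 ∈ L) (le : List A') (hle : le ∈ L')
    (pcs : List (List A' × List A))
    (hpcs : ∀ p ∈ pcs, p.1 ∈ L' ∧ p.1 ≠ [] ∧ p.2 ∈ L ∧ p.2 ≠ []) :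
    l0.map Sum.inl ++ pcs.flatMap piece ++ le.map Sum.inr ∈
      embLeft L *
        ((embRight L' \ {([] : List (A ⊕ A'))}) * (embLeft L \ {([] : List (A ⊕ A'))}))∗ *
        embRight L' := by
  refine Language.mem_mul.2 ⟨l0.map Sum.inl ++ pcs.flatMap piece, ?_,
    le.map Sum.inr, ⟨le, hle, rfl⟩, rfl⟩
  refine Language.mem_mul.2 ⟨l0.map Sum.inl, ⟨l0, hl0, rfl⟩, pcs.flatMap piece, ?_, rfl⟩
  have hfl : pcs.flatMap piece = (pcs.map piece).flatten := rfl
  rw [hfl]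
  refine Language.join_mem_kstar ?_
  intro y hy
  obtain ⟨p, hp, rfl⟩ := List.mem_map.1 hy
  obtain ⟨h1, h2, h3, h4⟩ := hpcs p hp
  refine Language.mem_mul.2 ⟨p.1.map Sum.inr, ⟨⟨p.1, h1, rfl⟩, ?_⟩,
    p.2.map Sum.inl, ⟨⟨p.2, h3, rfl⟩, ?_⟩, rfl⟩
  · intro hmem
    exact h2 (by simpa using Set.mem_singleton_iff.1 hmem)
  · intro hmem
    exact h4 (by simpa using Set.mem_singleton_iff.1 hmem)

lemma map_injOn_list {α β : Type} {F : α → β} {P : α → Prop}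
    (hF : ∀ a b, P a → P b → F a = F b → a = b) :
    ∀ xs ys : List α, (∀ x ∈ xs, P x) → (∀ y ∈ ys, P y) → xs.map F = ys.map F → xs = ys := by
  intro xs
  induction xs with
  | nil => intro ys _ _ h; cases ys <;> simp_all
  | cons x xs ih =>
    intro ys hx hy h
    cases ys with
    | nil => simp at h
    | cons y ys =>
      simp only [List.map_cons, List.cons.injEq] at h
      have := hF x y (hx x (by simp)) (hy y (by simp)) h.1
      rw [this, ih ys (fun z hz => hx z (by simp [hz])) (fun z hz => hy z (by simp [hz])) h.2]

end NFAux

/-- If `L ⊆ A*` maps bijectively onto `G` (with `ε` representing `1`) and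
`L' ⊆ A'*` maps bijectively onto `G'` (with `ε` representing `1`), then the language
`N = L · ((L' − {ε}) · (L − {ε}))* · L'` over the disjoint union `A ⊕ A'` maps
bijectively onto the free product `G ∗ G'` under the induced evaluation map. -/
theorem free_product_normal_form {A A' G G' : Type} [Group G] [Group G']
    (π : FreeMonoid A →* G) (π' : FreeMonoid A' →* G')
    (L : Set (List A)) (L' : Set (List A'))
    (hL : Set.BijOn (fun w : List A => π (FreeMonoid.ofList w)) L Set.univ)
    (hLε : [] ∈ L) (hL1 : π (FreeMonoid.ofList ([] : List A)) = 1)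
    (hL' : Set.BijOn (fun w : List A' => π' (FreeMonoid.ofList w)) L' Set.univ)
    (hL'ε : [] ∈ L') (hL'1 : π' (FreeMonoid.ofList ([] : List A')) = 1) :
    Set.BijOn (fun w : List (A ⊕ A') => evHom π π' (FreeMonoid.ofList w))
      (embLeft L *
        ((embRight L' \ {([] : List (A ⊕ A'))}) * (embLeft L \ {([] : List (A ⊕ A'))}))∗ *
        embRight L')
      Set.univ := by
  have F := fun p : List A' × List A => (π' (FreeMonoid.ofList p.1), π (FreeMonoid.ofList p.2))
  refine ⟨fun _ _ => Set.mem_univ _, ?_, ?_⟩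
  · -- InjOn
    intro w1 h1 w2 h2 heq
    obtain ⟨a1, ha1, b1, hb1, pcs1, hp1, rfl⟩ := NFAux.decomp h1
    obtain ⟨a2, ha2, b2, hb2, pcs2, hp2, rfl⟩ := NFAux.decomp h2
    beta_reduce at heq
    rw [NFAux.ev_decomp, NFAux.ev_decomp] at heq
    have good : ∀ (pcs : List (List A' × List A)),
        (∀ p ∈ pcs, p.1 ∈ L' ∧ p.1 ≠ [] ∧ p.2 ∈ L ∧ p.2 ≠ []) →
        NFAux.Good (pcs.map fun p => (π' (FreeMonoid.ofList p.1), π (FreeMonoid.ofList p.2))) := by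
      intro pcs hpcs q hq
      obtain ⟨p, hp, rfl⟩ := List.mem_map.1 hq
      obtain ⟨m1, m2, m3, m4⟩ := hpcs p hp
      constructor
      · intro hone
        exact m2 (hL'.injOn m1 hL'ε (by simpa [hL'1] using hone))
      · intro hone
        exact m4 (hL.injOn m3 hLε (by simpa [hL1] using hone))
    obtain ⟨e1, e2, e3⟩ := NFAux.phi_inj (good pcs1 hp1) (good pcs2 hp2) heq
    have ea : a1 = a2 := hL.injOn ha1 ha2 e1
    have eb : b1 = b2 := hL'.injOn hb1 hb2 e3
    have ep : pcs1 = pcs2 := by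
      refine NFAux.map_injOn_list (P := fun p => p.1 ∈ L' ∧ p.2 ∈ L)
        ?_ pcs1 pcs2 (fun p hp => ⟨(hp1 p hp).1, (hp1 p hp).2.2.1⟩)
        (fun p hp => ⟨(hp2 p hp).1, (hp2 p hp).2.2.1⟩) e2
      intro p q hp hq hpq
      simp only [Prod.mk.injEq] at hpq
      have c1 : p.1 = q.1 := hL'.injOn hp.1 hq.1 hpq.1
      have c2 : p.2 = q.2 := hL.injOn hp.2 hq.2 hpq.2
      cases p; cases q; simp_all
    rw [ea, eb, ep]
  · -- SurjOn
    intro x _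
    obtain ⟨g, ps, g', hgood, rfl⟩ := NFAux.phi_surj x
    obtain ⟨a, ha, hga⟩ := hL.surjOn (Set.mem_univ g)
    obtain ⟨b, hb, hgb⟩ := hL'.surjOn (Set.mem_univ g')
    have hga' : π (FreeMonoid.ofList a) = g := hga
    have hgb' : π' (FreeMonoid.ofList b) = g' := hgb
    have build : ∀ ps : List (G' × G), NFAux.Good ps →
        ∃ pcs : List (List A' × List A),
          (∀ p ∈ pcs, p.1 ∈ L' ∧ p.1 ≠ [] ∧ p.2 ∈ L ∧ p.2 ≠ []) ∧
          (pcs.map fun p => (π' (FreeMonoid.ofList p.1), π (FreeMonoid.ofList p.2))) = ps := by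
      intro ps
      induction ps with
      | nil => exact fun _ => ⟨[], by simp, by simp⟩
      | cons q ps ih =>
        intro hgood
        obtain ⟨pcs, hc1, hc2⟩ := ih fun r hr => hgood r (List.mem_cons_of_mem _ hr)
        obtain ⟨u, hu, huq⟩ := hL'.surjOn (Set.mem_univ q.1)
        obtain ⟨v, hv, hvq⟩ := hL.surjOn (Set.mem_univ q.2)
        have huq' : π' (FreeMonoid.ofList u) = q.1 := huq
        have hvq' : π (FreeMonoid.ofList v) = q.2 := hvq
        refine ⟨(u, v) :: pcs, ?_, ?_⟩
        · intro p hp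
          rcases List.mem_cons.1 hp with rfl | hp
          · refine ⟨hu, ?_, hv, ?_⟩
            · intro hnil
              have hnil' : u = [] := hnil
              exact (hgood q (List.mem_cons_self)).1 (by rw [← huq', hnil', hL'1])
            · intro hnil
              have hnil' : v = [] := hnil
              exact (hgood q (List.mem_cons_self)).2 (by rw [← hvq', hnil', hL1])
          · exact hc1 p hp
        · show (π' (FreeMonoid.ofList u), π (FreeMonoid.ofList v)) ::
              (pcs.map fun p => (π' (FreeMonoid.ofList p.1), π (FreeMonoid.ofList p.2))) = q :: ps
          rw [hc2, huq', hvq']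
    obtain ⟨pcs, hpc, hmap⟩ := build ps hgood
    refine ⟨a.map Sum.inl ++ pcs.flatMap NFAux.piece ++ b.map Sum.inr,
      NFAux.recomp a ha b hb pcs hpc, ?_⟩
    show evHom π π' (FreeMonoid.ofList _) = _
    rw [NFAux.ev_decomp, hmap, hga', hgb']
end
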